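/- arXiv:1603.05104 — 5 statements merged into one kernel-verified Lean document; each statement's English description precedes it below -/
import Mathlib

section
/- For p an odd prime and k a field of characteristic p, the element (x_3 x_4 x_5 x_6)^{p-1} does not belong to the ideal (x_1x_2 + x_3x_4 + x_5x_6, x_1^p, x_2^p, x_3^p, x_4^p, x_5^p, x_6^p) of k[x_1,...,x_6]. -/
/-!
Let `J = (x₁^p, …, x₆^p)`, `n = p - 1` and `f = x₁x₂ + x₃x₄ + x₅x₆`. Since `f` has no constant
term, Frobenius gives `f^p ∈ J`, so multiplication by `f^n` maps the whole ideal into `J`.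
With `g = (x₃x₄x₅x₆)^n` and `f = x₁x₂ + w`, every monomial of `g·w` contains some `x_i^p`, so
`g·f^n ≡ g·(x₁x₂)^n = (x₁⋯x₆)^n (mod J)`. This monomial is not divisible by any `x_i^p`,
hence `g·f^n ∉ J` and `g` is not in the ideal.
-/

namespace Ideal

variable {A : Type*}

theorem pow_mem_span_image_pow [CommSemiring A] (p : ℕ) [ExpChar A p] {s : Set A} {x : A}
    (hx : x ∈ span s) : x ^ p ∈ span ((· ^ p) '' s) := by
  have := mem_map_of_mem (frobenius A p) hx
  rwa [map_span] at this

theorem mul_pow_mem_of_mem_span_insert [CommSemiring A] {J : Ideal A} {S : Set A} {f g : A}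
    {n : ℕ} (hS : S ⊆ J) (hf : f ^ (n + 1) ∈ J) (hg : g ∈ span (insert f S)) :
    g * f ^ n ∈ J := by
  obtain ⟨a, z, hz, rfl⟩ := mem_span_insert.mp hg
  rw [add_mul, mul_assoc, ← pow_succ']
  exact J.add_mem (J.mul_mem_left a hf) (J.mul_mem_right _ (span_le.mpr hS hz))

theorem mul_add_pow_sub_mul_pow_mem [CommRing A] {J : Ideal A} {a u w : A} (h : a * w ∈ J)
    (n : ℕ) : a * (u + w) ^ n - a * u ^ n ∈ J := by
  obtain ⟨c, hc⟩ := sub_dvd_pow_sub_pow (u + w) u n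
  rw [← mul_sub, hc, add_sub_cancel_left, ← mul_assoc]
  exact J.mul_mem_right c h

end Ideal

namespace MvPolynomial

variable {σ R : Type*} [CommSemiring R]

theorem pow_mem_span_X_pow_of_mem_idealOfVars (p : ℕ) [ExpChar R p] {f : MvPolynomial σ R}
    (hf : f ∈ idealOfVars σ R) :
    f ^ p ∈ Ideal.span (Set.range fun i => (X i : MvPolynomial σ R) ^ p) := by
  have := Ideal.pow_mem_span_image_pow p hf
  rwa [← Set.range_comp] at this

theorem monomial_one_mem_span_X_pow_iff [Nontrivial R] {d : σ →₀ ℕ} {m : ℕ} :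
    monomial d (1 : R) ∈ Ideal.span (Set.range fun i => (X i : MvPolynomial σ R) ^ m) ↔
      ∃ i, m ≤ d i := by
  classical
  have : Set.range (fun i => (X i : MvPolynomial σ R) ^ m) =
      (monomial · 1) '' Set.range fun i => Finsupp.single i m := by
    simp [← Set.range_comp, Function.comp_def, X_pow_eq_monomial]
  simp [this, mem_ideal_span_monomial_image, support_monomial, Finsupp.single_le_iff]

theorem prod_X_pow_not_mem_span_X_pow [Nontrivial R] [Fintype σ] {n m : ℕ} (h : n < m) :
    ∏ i, (X i : MvPolynomial σ R) ^ n ∉ Ideal.span (Set.range fun i => X i ^ m) := by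
  rw [prod_X_pow (fun _ => n), monomial_one_mem_span_X_pow_iff]
  rintro ⟨i, hi⟩
  rw [Finsupp.indicator_of_mem (Finset.mem_univ i)] at hi
  exact hi.not_gt h

variable (R)

theorem quadric_pow_mem_span_X_pow (p : ℕ) [ExpChar R p] :
    (X 0 * X 1 + X 2 * X 3 + X 4 * X 5 : MvPolynomial (Fin 6) R) ^ p ∈
      Ideal.span (Set.range fun i => X i ^ p) := by
  have hX (i : Fin 6) : X i ∈ idealOfVars (Fin 6) R := Ideal.subset_span ⟨i, rfl⟩
  refine pow_mem_span_X_pow_of_mem_idealOfVars p ?_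
  exact add_mem (add_mem (Ideal.mul_mem_right (X 1) _ (hX 0))
    (Ideal.mul_mem_right (X 3) _ (hX 2))) (Ideal.mul_mem_right (X 5) _ (hX 4))

theorem prod_pow_mul_mem_span_X_pow (n : ℕ) :
    (X 2 * X 3 * X 4 * X 5 : MvPolynomial (Fin 6) R) ^ n * (X 2 * X 3 + X 4 * X 5) ∈
      Ideal.span (Set.range fun i => X i ^ (n + 1)) := by
  rw [show (X 2 * X 3 * X 4 * X 5 : MvPolynomial (Fin 6) R) ^ n * (X 2 * X 3 + X 4 * X 5) =
    X 2 ^ (n + 1) * (X 3 ^ (n + 1) * (X 4 * X 5) ^ n) +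
      X 4 ^ (n + 1) * (X 5 ^ (n + 1) * (X 2 * X 3) ^ n) by ring]
  exact add_mem (Ideal.mul_mem_right _ _ (Ideal.subset_span ⟨2, rfl⟩))
    (Ideal.mul_mem_right _ _ (Ideal.subset_span ⟨4, rfl⟩))

end MvPolynomial

open MvPolynomial in
theorem prod_pow_not_mem_quadric_ideal_general
    (p : ℕ) (hp : p.Prime) (k : Type*) [Field k] [CharP k p] :
    (X 2 * X 3 * X 4 * X 5 : MvPolynomial (Fin 6) k) ^ (p - 1) ∉
      Ideal.span {(X 0 * X 1 + X 2 * X 3 + X 4 * X 5 : MvPolynomial (Fin 6) k),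
        (X 0 : MvPolynomial (Fin 6) k) ^ p, (X 1 : MvPolynomial (Fin 6) k) ^ p,
        (X 2 : MvPolynomial (Fin 6) k) ^ p, (X 3 : MvPolynomial (Fin 6) k) ^ p,
        (X 4 : MvPolynomial (Fin 6) k) ^ p, (X 5 : MvPolynomial (Fin 6) k) ^ p} := by
  have := Fact.mk hp
  obtain ⟨n, rfl⟩ := Nat.exists_eq_add_one_of_ne_zero hp.ne_zero
  intro hmem
  rw [Nat.add_sub_cancel] at hmem
  have hXJ (i : Fin 6) : (X i : MvPolynomial (Fin 6) k) ^ (n + 1) ∈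
      Ideal.span (Set.range fun i => X i ^ (n + 1)) := Ideal.subset_span ⟨i, rfl⟩
  have hfJ := Ideal.mul_pow_mem_of_mem_span_insert (by simp [Set.insert_subset_iff, hXJ])
    (quadric_pow_mem_span_X_pow k (n + 1)) hmem
  rw [add_assoc] at hfJ
  have huJ := (Submodule.sub_mem_iff_right _ hfJ).mp
    (Ideal.mul_add_pow_sub_mul_pow_mem (prod_pow_mul_mem_span_X_pow k n) n)
  refine prod_X_pow_not_mem_span_X_pow (σ := Fin 6) (R := k) n.lt_succ_self ?_
  convert huJ using 1
  rw [Fin.prod_univ_six]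
  ring

open MvPolynomial in
/-- For `p` an odd prime and `k` a field of characteristic `p`, the element
`(x₃x₄x₅x₆)^(p-1)` does not belong to the ideal
`(x₁x₂ + x₃x₄ + x₅x₆, x₁^p, …, x₆^p)` of `k[x₁,…,x₆]`. -/
theorem prod_pow_not_mem_quadric_ideal
    (p : ℕ) (hp : p.Prime) (hodd : p ≠ 2) (k : Type*) [Field k] [CharP k p] :
    (X 2 * X 3 * X 4 * X 5 : MvPolynomial (Fin 6) k) ^ (p - 1) ∉
      Ideal.span {(X 0 * X 1 + X 2 * X 3 + X 4 * X 5 : MvPolynomial (Fin 6) k),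
        (X 0 : MvPolynomial (Fin 6) k) ^ p, (X 1 : MvPolynomial (Fin 6) k) ^ p,
        (X 2 : MvPolynomial (Fin 6) k) ^ p, (X 3 : MvPolynomial (Fin 6) k) ^ p,
        (X 4 : MvPolynomial (Fin 6) k) ^ p, (X 5 : MvPolynomial (Fin 6) k) ^ p} :=
  prod_pow_not_mem_quadric_ideal_general p hp k
end

section
/- Let p be an odd prime and k a field of characteristic p. Define P = Σ_{i+j+l = p, i,j,l ≠ p} ((p-1)!/(i! j! l!)) (x_1x_2)^i (x_3x_4)^j (x_5x_6)^l in k[x_1,...,x_6] (the binomial coefficients interpreted via lifting to the integers). Then P does not belong to the ideal (x_1x_2 + x_3x_4 + x_5x_6, x_1^p, ..., x_6^p). -/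
/-!
Write `y₁ = x₁x₂`, `y₂ = x₃x₄`, `y₃ = x₅x₆` and `q = y₁ + y₂ + y₃`. Over `ℕ`, `P` is the carry
`((y₁ + y₂ + y₃)^p - y₁^p - y₂^p - y₃^p) / p`, reduced mod `p`.

The linear form `f ↦ [(x₁⋯x₆)^(p-1)] (f q^(p-1) y₁^(p-2))` kills the ideal: multiples of `x_i^p`
miss the monomial `(x₁⋯x₆)^(p-1)`, and `q q^(p-1) = q^p = y₁^p + y₂^p + y₃^p` in characteristic
`p`. Over `ℕ`, `p P q^(p-1) y₁^(p-2) = q^(2p-1) y₁^(p-2) - (y₁^p + y₂^p + y₃^p) q^(p-1) y₁^(p-2)`,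
where the last term again misses that monomial, while in `q^(2p-1) y₁^(p-2)` its coefficient is
the multinomial `(2p-1)! / (1! (p-1)! (p-1)!) = p · choose (2p-1) p`. So the form takes the value
`choose (2p-1) p ≡ 1 (mod p)` on `P`.
-/

open MvPolynomial Finset Nat

theorem Nat.multinomial_eq_prime_mul {ι : Type*} {p : ℕ} (hp : p.Prime) (s : Finset ι)
    (f : ι → ℕ) (hsum : ∑ i ∈ s, f i = p) (hlt : ∀ i ∈ s, f i < p) :
    multinomial s f = p * ((p - 1)! / ∏ i ∈ s, (f i)!) := by
  have hcop : Coprime (∏ i ∈ s, (f i)!) p := Coprime.prod_left fun i hi =>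
    Coprime.symm <| hp.coprime_iff_not_dvd.2 fun h => (hlt i hi).not_ge (hp.dvd_factorial.1 h)
  have hfac : p * (p - 1)! = p ! := mul_factorial_pred hp.ne_zero
  have hdvd : ∏ i ∈ s, (f i)! ∣ (p - 1)! :=
    hcop.dvd_of_dvd_mul_left ⟨multinomial s f, by rw [hfac, ← hsum, multinomial_spec]⟩
  rw [multinomial, hsum, ← hfac, Nat.mul_div_assoc _ hdvd]

theorem Nat.multinomial_one_self_self (n : ℕ) :
    multinomial univ ![1, n, n] = (n + 1) * choose (2 * n + 1) (n + 1) := by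
  have h := multinomial_spec univ ![1, n, n]
  have hc := choose_mul_factorial_mul_factorial (show n + 1 ≤ 2 * n + 1 by omega)
  simp only [Fin.prod_univ_three, Fin.sum_univ_three, Matrix.cons_val_zero, Matrix.cons_val_one,
    Matrix.cons_val_two, Matrix.head_cons, Matrix.tail_cons, factorial_one, one_mul] at h
  rw [show 2 * n + 1 - (n + 1) = n by omega, factorial_succ] at hc
  apply Nat.eq_of_mul_eq_mul_left (mul_pos (factorial_pos n) (factorial_pos n))
  rw [h, show 1 + n + n = 2 * n + 1 by omega, ← hc]
  ring

theorem Nat.choose_two_mul_sub_one_modEq_one {p : ℕ} (hp : p.Prime) :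
    choose (2 * p - 1) p ≡ 1 [MOD p] := by
  have := Fact.mk hp
  have hp1 := hp.one_le
  have h2p : 2 * p - 1 = (p - 1) + p * 1 := by omega
  have hmod : (2 * p - 1) % p = p - 1 := by
    rw [h2p, add_mul_mod_self_left, Nat.mod_eq_of_lt (by omega)]
  have hdiv : (2 * p - 1) / p = 1 := by
    rw [h2p, add_mul_div_left _ _ hp.pos, Nat.div_eq_of_lt (by omega)]
  simpa [hmod, hdiv, Nat.div_self hp.pos] using
    Choose.choose_modEq_choose_mod_mul_choose_div_nat (n := 2 * p - 1) (k := p) (p := p)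

theorem Finset.Nat.filter_antidiagonalTuple_not_forall_ne (k n : ℕ) :
    (antidiagonalTuple k n).filter (fun t => ¬ ∀ m, t m ≠ n) =
      univ.image fun m => Pi.single m n := by
  ext t
  simp only [mem_filter, mem_antidiagonalTuple, not_forall, not_not, mem_image, mem_univ,
    true_and]
  constructor
  · rintro ⟨hsum, m, hm⟩
    refine ⟨m, funext fun i => ?_⟩
    rcases eq_or_ne i m with rfl | him
    · simp [hm]
    · have hsplit := add_sum_erase univ t (mem_univ m)
      have hrest : ∑ j ∈ univ.erase m, t j = 0 := by omega
      simp [him, sum_eq_zero_iff.1 hrest i (by simp [him])]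
  · rintro ⟨m, rfl⟩
    exact ⟨by simp, m, by simp⟩

section Carry
variable {A : Type*} [CommSemiring A]

theorem add_add_pow_eq_sum_antidiagonalTuple (a b c : A) (n : ℕ) :
    (a + b + c) ^ n = ∑ t ∈ antidiagonalTuple 3 n,
      (multinomial univ t : A) * a ^ t 0 * b ^ t 1 * c ^ t 2 := by
  have h := sum_pow_eq_sum_piAntidiag univ ![a, b, c] n
  simp only [Fin.sum_univ_three, Fin.prod_univ_three, piAntidiag_univ_fin_eq_antidiagonalTuple,
    Matrix.cons_val_zero, Matrix.cons_val_one, Matrix.cons_val_two, Matrix.head_cons,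
    Matrix.tail_cons] at h
  simp only [h, mul_assoc]

def trinomialCarry (p : ℕ) (a b c : A) : A :=
  ∑ t ∈ (antidiagonalTuple 3 p).filter (fun t => ∀ m : Fin 3, t m ≠ p),
    (((p - 1)! / ((t 0)! * (t 1)! * (t 2)!) : ℕ) : A) * a ^ t 0 * b ^ t 1 * c ^ t 2

theorem map_trinomialCarry {B F : Type*} [CommSemiring B] [FunLike F A B] [RingHomClass F A B]
    (f : F) (p : ℕ) (a b c : A) :
    f (trinomialCarry p a b c) = trinomialCarry p (f a) (f b) (f c) := by
  simp only [trinomialCarry, map_sum, map_mul, map_pow, map_natCast]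

theorem add_add_pow_prime {p : ℕ} (hp : p.Prime) (a b c : A) :
    (a + b + c) ^ p = p * trinomialCarry p a b c + (a ^ p + b ^ p + c ^ p) := by
  rw [add_add_pow_eq_sum_antidiagonalTuple, ← sum_filter_add_sum_filter_not _
    (fun t => ∀ m : Fin 3, t m ≠ p), Nat.filter_antidiagonalTuple_not_forall_ne,
    sum_image fun m _ m' _ h => by
      simpa [Pi.single_apply, hp.ne_zero, eq_comm] using congr_fun h m]
  congr 1
  · rw [trinomialCarry, mul_sum]
    refine sum_congr rfl fun t ht => ?_
    obtain ⟨hsum, hne⟩ := mem_filter.1 ht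
    rw [mem_antidiagonalTuple] at hsum
    have hlt : ∀ m ∈ univ, t m < p := fun m _ =>
      lt_of_le_of_ne (hsum ▸ single_le_sum (fun _ _ => Nat.zero_le _) (mem_univ m)) (hne m)
    rw [Nat.multinomial_eq_prime_mul hp univ t hsum hlt, Fin.prod_univ_three]
    push_cast
    ring
  · simp [Fin.sum_univ_three, multinomial_single]

end Carry

theorem MvPolynomial.coeff_eq_zero_of_mem_span_X_pow {σ R : Type*} [CommSemiring R] {n : ℕ}
    {f : MvPolynomial σ R}
    (hf : f ∈ Ideal.span (Set.range fun i => (X i : MvPolynomial σ R) ^ n)) {d : σ →₀ ℕ}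
    (hd : ∀ i, d i < n) : coeff d f = 0 := by
  have hrange : (Set.range fun i => (X i : MvPolynomial σ R) ^ n) =
      (fun s => monomial s (1 : R)) '' Set.range fun i => Finsupp.single i n := by
    rw [← Set.range_comp]
    simp only [Function.comp_def, X_pow_eq_monomial]
  rw [hrange, mem_ideal_span_monomial_image] at hf
  by_contra h
  obtain ⟨_, ⟨i, rfl⟩, hle⟩ := hf d (mem_support_iff.2 h)
  exact (hd i).not_ge (by simpa using hle i)

section Pairs
variable {R : Type*} [CommSemiring R]

noncomputable def pairExp (a b c : ℕ) : Fin 6 →₀ ℕ :=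
  Finsupp.single 0 a + Finsupp.single 1 a + Finsupp.single 2 b + Finsupp.single 3 b +
    Finsupp.single 4 c + Finsupp.single 5 c

theorem pairExp_add (a b c a' b' c' : ℕ) :
    pairExp (a + a') (b + b') (c + c') = pairExp a b c + pairExp a' b' c' := by
  simp only [pairExp, Finsupp.single_add]
  abel

theorem pairExp_inj {a b c a' b' c' : ℕ} :
    pairExp a b c = pairExp a' b' c' ↔ a = a' ∧ b = b' ∧ c = c' := by
  constructor
  · intro h
    have h0 := DFunLike.congr_fun h 0
    have h2 := DFunLike.congr_fun h 2
    have h4 := DFunLike.congr_fun h 4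
    simp [pairExp] at h0 h2 h4
    exact ⟨h0, h2, h4⟩
  · rintro ⟨rfl, rfl, rfl⟩
    rfl

theorem pairExp_self_apply (n : ℕ) (i : Fin 6) : pairExp n n n i = n := by
  fin_cases i <;> simp [pairExp]

theorem C_mul_pairs_pow (r : R) (a b c : ℕ) :
    (C r * (X 0 * X 1) ^ a * (X 2 * X 3) ^ b * (X 4 * X 5) ^ c : MvPolynomial (Fin 6) R) =
      monomial (pairExp a b c) r := by
  simp only [mul_pow, X_pow_eq_monomial, C_mul_monomial, monomial_mul, mul_one, pairExp,
    add_assoc]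

theorem coeff_pairExp_pairs_sum_pow (a b c : ℕ) :
    coeff (pairExp a b c)
      ((X 0 * X 1 + X 2 * X 3 + X 4 * X 5 : MvPolynomial (Fin 6) R) ^ (a + b + c)) =
      multinomial univ ![a, b, c] := by
  rw [add_add_pow_eq_sum_antidiagonalTuple, coeff_sum, sum_eq_single ![a, b, c]]
  · rw [← map_natCast C, C_mul_pairs_pow, coeff_monomial]
    exact if_pos rfl
  · intro t _ ht
    rw [← map_natCast C, C_mul_pairs_pow, coeff_monomial, if_neg]
    rw [pairExp_inj]
    rintro ⟨h0, h1, h2⟩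
    exact ht (funext fun i => by fin_cases i <;> simp [h0, h1, h2])
  · intro h
    exact absurd (by simp [mem_antidiagonalTuple, Fin.sum_univ_three]) h

theorem pairs_pow_mem_span_X_pow (n : ℕ) :
    ((X 0 * X 1) ^ n + (X 2 * X 3) ^ n + (X 4 * X 5) ^ n : MvPolynomial (Fin 6) R) ∈
      Ideal.span (Set.range fun i => X i ^ n) := by
  have hX : ∀ i j : Fin 6, (X i * X j : MvPolynomial (Fin 6) R) ^ n ∈
      Ideal.span (Set.range fun i => X i ^ n) := fun i j => by
    rw [mul_pow]
    exact Ideal.mul_mem_right _ _ (Ideal.subset_span ⟨i, rfl⟩)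
  exact add_mem (add_mem (hX 0 1) (hX 2 3)) (hX 4 5)

theorem mul_pairs_sum_pow_pred_mem_span_X_pow {p : ℕ} (hp : p.Prime) [CharP R p]
    {f : MvPolynomial (Fin 6) R}
    (hf : f ∈ Ideal.span {X 0 * X 1 + X 2 * X 3 + X 4 * X 5, X 0 ^ p, X 1 ^ p, X 2 ^ p,
      X 3 ^ p, X 4 ^ p, X 5 ^ p}) :
    f * (X 0 * X 1 + X 2 * X 3 + X 4 * X 5) ^ (p - 1) ∈
      Ideal.span (Set.range fun i => X i ^ p) := by
  have := Fact.mk hp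
  refine Submodule.mem_colon_singleton.1 <| (Ideal.span_le.2 ?_) hf
  simp only [Set.insert_subset_iff, Set.singleton_subset_iff, SetLike.mem_coe,
    Submodule.mem_colon_singleton, smul_eq_mul]
  have hX : ∀ i, X i ^ p * (X 0 * X 1 + X 2 * X 3 + X 4 * X 5) ^ (p - 1) ∈
      Ideal.span (Set.range fun i => (X i : MvPolynomial (Fin 6) R) ^ p) := fun i =>
    Ideal.mul_mem_right _ _ (Ideal.subset_span ⟨i, rfl⟩)
  refine ⟨?_, hX 0, hX 1, hX 2, hX 3, hX 4, hX 5⟩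
  rw [← pow_succ' (M := MvPolynomial (Fin 6) R), Nat.sub_add_cancel hp.one_le]
  simpa only [add_pow_char, mul_pow] using pairs_pow_mem_span_X_pow (R := R) p

end Pairs

theorem coeff_trinomialCarry_pairs_mul_eq_choose {p : ℕ} (hp : p.Prime) :
    coeff (pairExp (p - 1) (p - 1) (p - 1))
      (trinomialCarry p (X 0 * X 1) (X 2 * X 3) (X 4 * X 5) *
        (X 0 * X 1 + X 2 * X 3 + X 4 * X 5) ^ (p - 1) * (X 0 * X 1) ^ (p - 2) :
        MvPolynomial (Fin 6) ℕ) = choose (2 * p - 1) p := by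
  set q : MvPolynomial (Fin 6) ℕ := X 0 * X 1 + X 2 * X 3 + X 4 * X 5 with hq
  set D := pairExp (p - 1) (p - 1) (p - 1)
  have hp2 := hp.two_le
  have hexpand : q ^ (2 * p - 1) * (X 0 * X 1) ^ (p - 2) =
      (p : MvPolynomial (Fin 6) ℕ) * (trinomialCarry p (X 0 * X 1) (X 2 * X 3) (X 4 * X 5) *
        q ^ (p - 1) * (X 0 * X 1) ^ (p - 2)) +
      ((X 0 * X 1) ^ p + (X 2 * X 3) ^ p + (X 4 * X 5) ^ p) *
        (q ^ (p - 1) * (X 0 * X 1) ^ (p - 2)) := by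
    rw [show 2 * p - 1 = p + (p - 1) by omega, pow_add, hq, add_add_pow_prime hp]
    ring
  have hpow : coeff D (q ^ (2 * p - 1) * (X 0 * X 1) ^ (p - 2)) = p * choose (2 * p - 1) p := by
    have hD : D = pairExp 1 (p - 1) (p - 1) + pairExp (p - 2) 0 0 := by
      rw [← pairExp_add, add_zero, show 1 + (p - 2) = p - 1 by omega]
    have hmon : (X 0 * X 1) ^ (p - 2) = monomial (pairExp (p - 2) 0 0) 1 := by
      simpa using C_mul_pairs_pow (R := ℕ) 1 (p - 2) 0 0
    have h := Nat.multinomial_one_self_self (p - 1)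
    rw [Nat.sub_add_cancel hp.one_le, show 2 * (p - 1) + 1 = 2 * p - 1 by omega] at h
    rw [hD, hmon, coeff_mul_monomial, mul_one,
      show q ^ (2 * p - 1) = q ^ (1 + (p - 1) + (p - 1)) by congr 1; omega,
      coeff_pairExp_pairs_sum_pow, h, Nat.cast_id]
  have hrest : coeff D (((X 0 * X 1) ^ p + (X 2 * X 3) ^ p + (X 4 * X 5) ^ p) *
      (q ^ (p - 1) * (X 0 * X 1) ^ (p - 2))) = 0 :=
    coeff_eq_zero_of_mem_span_X_pow (Ideal.mul_mem_right _ _ (pairs_pow_mem_span_X_pow p))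
      fun i => by rw [pairExp_self_apply]; omega
  have h := congr_arg (coeff D) hexpand
  rw [coeff_add, hrest, add_zero, hpow, ← map_natCast (C : ℕ →+* MvPolynomial (Fin 6) ℕ),
    coeff_C_mul, Nat.cast_id] at h
  exact (Nat.eq_of_mul_eq_mul_left hp.pos h).symm

theorem coeff_trinomialCarry_pairs_mul_eq_one {R : Type*} [CommRing R] {p : ℕ} (hp : p.Prime)
    [CharP R p] :
    coeff (pairExp (p - 1) (p - 1) (p - 1))
      (trinomialCarry p (X 0 * X 1) (X 2 * X 3) (X 4 * X 5) *
        (X 0 * X 1 + X 2 * X 3 + X 4 * X 5) ^ (p - 1) * (X 0 * X 1) ^ (p - 2) :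
        MvPolynomial (Fin 6) R) = 1 := by
  have h := congr_arg (Nat.castRingHom R) (coeff_trinomialCarry_pairs_mul_eq_choose hp)
  rw [← coeff_map] at h
  simp only [map_mul, map_pow, map_add, map_X, map_trinomialCarry] at h
  rwa [eq_natCast, (CharP.natCast_eq_natCast R p).2 (Nat.choose_two_mul_sub_one_modEq_one hp),
    Nat.cast_one] at h

open MvPolynomial in
theorem P_not_mem_quadric_ideal_general
    (p : ℕ) (hp : p.Prime) (k : Type*) [Field k] [CharP k p] :
    (∑ t ∈ (Finset.Nat.antidiagonalTuple 3 p).filter (fun t => ∀ m : Fin 3, t m ≠ p),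
        (C ((((p - 1).factorial /
          ((t 0).factorial * (t 1).factorial * (t 2).factorial) : ℕ)) : k)) *
          (X 0 * X 1) ^ (t 0) * (X 2 * X 3) ^ (t 1) * (X 4 * X 5) ^ (t 2)
        : MvPolynomial (Fin 6) k) ∉
      Ideal.span {(X 0 * X 1 + X 2 * X 3 + X 4 * X 5 : MvPolynomial (Fin 6) k),
        (X 0 : MvPolynomial (Fin 6) k) ^ p, (X 1 : MvPolynomial (Fin 6) k) ^ p,
        (X 2 : MvPolynomial (Fin 6) k) ^ p, (X 3 : MvPolynomial (Fin 6) k) ^ p,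
        (X 4 : MvPolynomial (Fin 6) k) ^ p, (X 5 : MvPolynomial (Fin 6) k) ^ p} := by
  intro hmem
  simp only [map_natCast] at hmem
  have hzero := coeff_eq_zero_of_mem_span_X_pow
    (Ideal.mul_mem_right ((X 0 * X 1) ^ (p - 2)) _ (mul_pairs_sum_pow_pred_mem_span_X_pow hp hmem))
    fun i => (pairExp_self_apply (p - 1) i).trans_lt (Nat.sub_lt hp.pos one_pos)
  exact one_ne_zero ((coeff_trinomialCarry_pairs_mul_eq_one hp).symm.trans hzero)

open MvPolynomial in
/-- For `p` an odd prime and `k` a field of characteristic `p`, the polynomial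
`P = Σ_{i+j+l = p, i,j,l ≠ p} ((p-1)!/(i!j!l!)) (x₁x₂)^i (x₃x₄)^j (x₅x₆)^l`
does not belong to the ideal `(x₁x₂ + x₃x₄ + x₅x₆, x₁^p, …, x₆^p)`. -/
theorem P_not_mem_quadric_ideal
    (p : ℕ) (hp : p.Prime) (hodd : p ≠ 2) (k : Type*) [Field k] [CharP k p] :
    (∑ t ∈ (Finset.Nat.antidiagonalTuple 3 p).filter (fun t => ∀ m : Fin 3, t m ≠ p),
        (C ((((p - 1).factorial /
          ((t 0).factorial * (t 1).factorial * (t 2).factorial) : ℕ)) : k)) *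
          (X 0 * X 1) ^ (t 0) * (X 2 * X 3) ^ (t 1) * (X 4 * X 5) ^ (t 2)
        : MvPolynomial (Fin 6) k) ∉
      Ideal.span {(X 0 * X 1 + X 2 * X 3 + X 4 * X 5 : MvPolynomial (Fin 6) k),
        (X 0 : MvPolynomial (Fin 6) k) ^ p, (X 1 : MvPolynomial (Fin 6) k) ^ p,
        (X 2 : MvPolynomial (Fin 6) k) ^ p, (X 3 : MvPolynomial (Fin 6) k) ^ p,
        (X 4 : MvPolynomial (Fin 6) k) ^ p, (X 5 : MvPolynomial (Fin 6) k) ^ p} :=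
  P_not_mem_quadric_ideal_general p hp k
end

section
/- For n ≥ 3 and p an odd prime, the Artinian local k-algebra A = k[x_1,...,x_{2n}]/(x_1x_2 + ... + x_{2n-1}x_{2n}, x_1^p, ..., x_{2n}^p) does not admit a flat lifting to W_2(k); that is, there is no flat W_2(k)-algebra B with B/pB ≅ A. -/
/-!
Lift the generators `x_v` of `A` to `B`. As `p² = 0` in `W₂(k)` and `x_vᵖ ∈ pB`, the products
`u_i = x_{i0} x_{i1}` satisfy `u_iᵖ = 0`, while `∑ u_i ∈ pB` gives `(∑ u_i)ᵖ = 0`. Writing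
`(∑ u_i)ᵖ = ∑ u_iᵖ + p • w(u)` with `w ∈ ℤ[u]`, we get `p • w(u) = 0`. Flatness over `W₂(k)`,
where the annihilator of `p` is `pW₂(k)` because `k` is perfect, gives `w(u) ∈ pB`, so
`w(x_{i0} x_{i1})` vanishes in `A`.

This is impossible. Keeping only the monomials of `k[x]` that are monomials in the `x_{i0} x_{i1}`
is `k[u]`-linear, so it turns the relation into `w̄ ∈ (∑ u_i, u_iᵖ) ⊆ k[u]`. The specialization
`u ↦ (y₀, y₁, -(y₀ + y₁), 0, …)` (this needs `n ≥ 3`, and `p` odd) sends this ideal into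
`(y₀ᵖ, y₁ᵖ)`, and sends `w̄` to the reduction of `((y₀ + y₁)ᵖ - y₀ᵖ - y₁ᵖ) / p`, whose coefficient
at `y₀ y₁ᵖ⁻¹` is `1`.
-/

theorem Module.Flat.exact_lsmul {R M : Type*} [CommRing R] [AddCommGroup M] [Module R M]
    [Module.Flat R M] {r s : R}
    (h : Function.Exact (LinearMap.lsmul R R r) (LinearMap.lsmul R R s)) :
    Function.Exact (LinearMap.lsmul R M r) (LinearMap.lsmul R M s) := by
  have ladder (t : R) : LinearMap.lsmul R M t ∘ₗ TensorProduct.rid R M =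
      TensorProduct.rid R M ∘ₗ (LinearMap.lsmul R R t).lTensor M :=
    TensorProduct.ext' fun m a => by simp [mul_smul, smul_comm t a m]
  exact (Module.Flat.lTensor_exact M h).of_ladder_linearEquiv_of_exact (ladder r) (ladder s)

theorem exists_sum_pow_eq_sum_pow_add_mul {p : ℕ} (hp : p.Prime) {A α : Type*} [CommRing A]
    (s : Finset α) (f : α → A) : ∃ w, (∑ i ∈ s, f i) ^ p = ∑ i ∈ s, f i ^ p + p * w := by
  classical
  induction s using Finset.induction_on with
  | empty => exact ⟨0, by simp [zero_pow hp.ne_zero]⟩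
  | insert a s ha ih =>
    obtain ⟨w, hw⟩ := ih
    obtain ⟨r, hr⟩ := exists_add_pow_prime_eq hp (f a) (∑ i ∈ s, f i)
    refine ⟨w + f a * (∑ i ∈ s, f i) * r, ?_⟩
    rw [Finset.sum_insert ha, Finset.sum_insert ha, hr, hw]
    ring

open MvPolynomial

theorem natCast_dvd_aeval_of_dvd_sum {p : ℕ} (hp : p.Prime) {B ι : Type*} [CommRing B]
    [Fintype ι] (hp2 : (p : B) ^ 2 = 0) (hexact : ∀ b : B, (p : B) * b = 0 → (p : B) ∣ b)
    {u : ι → B} (hsum : (p : B) ∣ ∑ i, u i) (hpow : ∀ i, u i ^ p = 0) {w : MvPolynomial ι ℤ}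
    (hw : (∑ i, X i) ^ p = ∑ i, X i ^ p + (p : MvPolynomial ι ℤ) * w) :
    (p : B) ∣ aeval u w := by
  apply hexact
  obtain ⟨c, hc⟩ := hsum
  have h := congrArg (aeval u) hw
  simp only [map_pow, map_sum, map_add, map_mul, map_natCast, aeval_X, hpow,
    Finset.sum_const_zero, zero_add, hc, mul_pow] at h
  rw [← h, pow_eq_zero_of_le hp.two_le hp2, zero_mul]

namespace TruncatedWittVector

variable {p : ℕ} [Fact p.Prime]

theorem natCast_sq_eq_zero {R : Type*} [CommRing R] [CharP R p] :
    (p : TruncatedWittVector p 2 R) ^ 2 = 0 := by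
  have h : (p : WittVector p R) ^ 2 ∈ RingHom.ker (WittVector.truncate (p := p) (R := R) 2) := by
    rw [WittVector.mem_ker_truncate]
    exact fun i hi => WittVector.coeff_p_pow_eq_zero p R hi.ne
  rwa [RingHom.mem_ker, map_pow, map_natCast] at h

/-- Multiplication by `p` on `W₂(R)` is `(x₀, x₁) ↦ (0, x₀ᵖ)`; over a perfect ring its kernel
is therefore `{(0, x₁)} = p W₂(R)`. -/
theorem exact_lsmul_natCast {R : Type*} [CommRing R] [CharP R p] [PerfectRing R p] :
    Function.Exact
      (LinearMap.lsmul (TruncatedWittVector p 2 R) (TruncatedWittVector p 2 R) (p : _))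
      (LinearMap.lsmul (TruncatedWittVector p 2 R) (TruncatedWittVector p 2 R) (p : _)) := by
  intro x
  simp only [LinearMap.lsmul_apply, smul_eq_mul, Set.mem_range]
  refine ⟨fun hx => ?_, fun ⟨y, hy⟩ => by
    rw [← hy, ← mul_assoc, ← sq, natCast_sq_eq_zero, zero_mul]⟩
  obtain ⟨y, rfl⟩ := WittVector.truncate_surjective p 2 R x
  have hker : ∀ i < 2, (y * p : WittVector p R).coeff i = 0 := by
    rw [← WittVector.mem_ker_truncate, RingHom.mem_ker, map_mul, map_natCast, mul_comm, hx]
  have hy0 : y.coeff 0 = 0 := by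
    have h := hker 1 one_lt_two
    rw [WittVector.mul_charP_coeff_succ (i := 0)] at h
    exact (frobeniusEquiv R p).injective (by rw [frobeniusEquiv_apply, frobenius_def, h, map_zero])
  refine ⟨WittVector.truncate 2
    (WittVector.mk p fun i => if i = 0 then (frobeniusEquiv R p).symm (y.coeff 1) else 0), ?_⟩
  rw [← map_natCast (WittVector.truncate (p := p) (R := R) 2), ← map_mul, mul_comm]
  ext i
  rw [WittVector.coeff_truncate, WittVector.coeff_truncate]
  fin_cases i
  · simp [WittVector.mul_charP_coeff_zero, hy0]
  · simp [WittVector.mul_charP_coeff_succ (i := 0)]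

theorem natCast_dvd_of_mul_eq_zero (R : Type*) [CommRing R] [CharP R p] [PerfectRing R p]
    {B : Type*} [CommRing B] [Algebra (TruncatedWittVector p 2 R) B]
    [Module.Flat (TruncatedWittVector p 2 R) B] {b : B} (hb : (p : B) * b = 0) : (p : B) ∣ b := by
  obtain ⟨c, hc⟩ := (Module.Flat.exact_lsmul (exact_lsmul_natCast (p := p) (R := R)) b).mp
    (by simpa [Nat.cast_smul_eq_nsmul] using hb)
  exact ⟨c, by simpa [Nat.cast_smul_eq_nsmul] using hc.symm⟩

theorem aeval_mul_eq_zero_of_ringEquiv (R : Type*) [CommRing R] [CharP R p] [PerfectRing R p]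
    {B : Type*} [CommRing B] [Algebra (TruncatedWittVector p 2 R) B]
    [Module.Flat (TruncatedWittVector p 2 R) B] {C ι : Type*} [CommRing C] [Fintype ι]
    (e : B ⧸ Ideal.span {(p : B)} ≃+* C) {a b : ι → C} (ha : ∀ i, a i ^ p = 0)
    (hb : ∀ i, b i ^ p = 0) (hsum : ∑ i, a i * b i = 0) {w : MvPolynomial ι ℤ}
    (hw : (∑ i, X i) ^ p = ∑ i, X i ^ p + (p : MvPolynomial ι ℤ) * w) :
    aeval (fun i => a i * b i) w = 0 := by
  let π : B →+* C := e.toRingHom.comp (Ideal.Quotient.mk _)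
  have hπ (x : B) : π x = 0 ↔ (p : B) ∣ x := by simp [π, Ideal.Quotient.eq_zero_iff_dvd]
  have hsurj : Function.Surjective π := e.surjective.comp Ideal.Quotient.mk_surjective
  choose a' ha' using fun i => hsurj (a i)
  choose b' hb' using fun i => hsurj (b i)
  have hp2 : (p : B) ^ 2 = 0 := by
    rw [← map_natCast (algebraMap (TruncatedWittVector p 2 R) B), ← map_pow, natCast_sq_eq_zero,
      map_zero]
  have hdvd := natCast_dvd_aeval_of_dvd_sum Fact.out hp2 (fun _ => natCast_dvd_of_mul_eq_zero R)
    (u := fun i => a' i * b' i) ?_ ?_ hw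
  · rw [← hπ, ← π.toIntAlgHom_apply, comp_aeval_apply] at hdvd
    simpa [ha', hb'] using hdvd
  · simp [← hπ, ha', hb', hsum]
  · intro i
    obtain ⟨c, hc⟩ := (hπ (a' i ^ p)).mp (by rw [map_pow, ha', ha])
    obtain ⟨d, hd⟩ := (hπ (b' i ^ p)).mp (by rw [map_pow, hb', hb])
    rw [mul_pow, hc, hd]
    linear_combination c * d * hp2

end TruncatedWittVector

namespace MvPolynomial

section PairProducts

variable {R : Type*} [CommSemiring R] {ι : Type*}

def IsBalanced (m : ι × Fin 2 →₀ ℕ) : Prop := ∀ i, m (i, 0) = m (i, 1)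

noncomputable def halfExponent (m : ι × Fin 2 →₀ ℕ) : ι →₀ ℕ :=
  m.comapDomain (·, 0) (Prod.mk_left_injective 0).injOn

@[simp]
theorem halfExponent_apply (m : ι × Fin 2 →₀ ℕ) (i : ι) : halfExponent m i = m (i, 0) := rfl

variable (R ι) in
noncomputable def pairProducts : MvPolynomial ι R →ₐ[R] MvPolynomial (ι × Fin 2) R :=
  aeval fun i => X (i, 0) * X (i, 1)

open Classical in
variable (R ι) in
noncomputable def balancedPart : MvPolynomial (ι × Fin 2) R →ₗ[R] MvPolynomial ι R :=
  (basisMonomials _ R).constr R fun m => if IsBalanced m then monomial (halfExponent m) 1 else 0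

@[simp]
theorem pairProducts_X (i : ι) : pairProducts R ι (X i) = X (i, 0) * X (i, 1) :=
  aeval_X _ _

open Classical in
theorem balancedPart_monomial (m : ι × Fin 2 →₀ ℕ) (c : R) :
    balancedPart R ι (monomial m c) = if IsBalanced m then monomial (halfExponent m) c else 0 := by
  have hbasis : monomial m c = c • basisMonomials (ι × Fin 2) R m := by
    rw [coe_basisMonomials, smul_monomial, smul_eq_mul, mul_one]
  rw [hbasis, map_smul, balancedPart, Module.Basis.constr_basis]
  split_ifs <;> simp [smul_monomial]

theorem balancedPart_mul_X_mul_X (f : MvPolynomial (ι × Fin 2) R) (i : ι) :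
    balancedPart R ι (f * (X (i, 0) * X (i, 1))) = balancedPart R ι f * X i := by
  classical
  induction f using induction_on' with
  | add f g hf hg => rw [add_mul, map_add, map_add, hf, hg, add_mul]
  | monomial m c =>
    set e : ι × Fin 2 →₀ ℕ := Finsupp.single (i, 0) 1 + Finsupp.single (i, 1) 1
    have he (j : ι) (ε : Fin 2) : e (j, ε) = if j = i then 1 else 0 := by
      rcases eq_or_ne j i with rfl | h
      · fin_cases ε <;> simp [e]
      · fin_cases ε <;> simp [e, h]
    have hbal : IsBalanced (m + e) ↔ IsBalanced m := forall_congr' fun j => by simp [he]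
    have hhalf : halfExponent (m + e) = halfExponent m + Finsupp.single i 1 := by
      ext j
      simp [he, Finsupp.single_apply, eq_comm]
    rw [X, X, monomial_mul, monomial_mul, mul_one, mul_one, balancedPart_monomial,
      balancedPart_monomial, hbal, hhalf]
    split_ifs <;> simp [X, monomial_mul]

theorem balancedPart_mul_pairProducts (f : MvPolynomial (ι × Fin 2) R) (g : MvPolynomial ι R) :
    balancedPart R ι (f * pairProducts R ι g) = balancedPart R ι f * g := by
  induction g using induction_on generalizing f with
  | C a => simp [pairProducts, ← smul_eq_C_mul, mul_comm _ (C a)]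
  | add g h hg hh => rw [map_add, mul_add, map_add, hg, hh, mul_add]
  | mul_X g i hg =>
    rw [map_mul (pairProducts R ι), pairProducts_X, ← mul_assoc, balancedPart_mul_X_mul_X, hg,
      mul_assoc]

theorem balancedPart_pairProducts (g : MvPolynomial ι R) :
    balancedPart R ι (pairProducts R ι g) = g := by
  rw [← one_mul (pairProducts R ι g), balancedPart_mul_pairProducts, ← C_1, ← monomial_zero',
    balancedPart_monomial]
  simp [IsBalanced, halfExponent]

theorem balancedPart_mul_X_pow_mem (f : MvPolynomial (ι × Fin 2) R) (v : ι × Fin 2) (e : ℕ) :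
    balancedPart R ι (f * X v ^ e) ∈ Ideal.span {X v.1 ^ e} := by
  classical
  induction f using induction_on' with
  | add f g hf hg => rw [add_mul, map_add]; exact add_mem hf hg
  | monomial m c =>
    rw [X_pow_eq_monomial (n := v), monomial_mul, mul_one, balancedPart_monomial]
    split_ifs with hbal
    · rw [Ideal.mem_span_singleton, X_pow_eq_monomial, monomial_dvd_monomial]
      refine ⟨Or.inr (Finsupp.single_le_iff.mpr ?_), one_dvd c⟩
      obtain ⟨i, ε⟩ := v
      have hv : halfExponent (m + Finsupp.single (i, ε) e) i =
          (m + Finsupp.single (i, ε) e) (i, ε) := by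
        fin_cases ε
        · rfl
        · exact hbal i
      simp [hv]
    · exact zero_mem _

theorem balancedPart_mem_span_of_mem {q : MvPolynomial ι R} {e : ℕ}
    {h : MvPolynomial (ι × Fin 2) R}
    (hh : h ∈ Ideal.span (insert (pairProducts R ι q) (Set.range fun v => X v ^ e))) :
    balancedPart R ι h ∈ Ideal.span (insert q (Set.range fun i => X i ^ e)) := by
  suffices ∀ f, balancedPart R ι (f * h) ∈ Ideal.span (insert q (Set.range fun i => X i ^ e)) by
    simpa using this 1
  refine Submodule.span_induction ?_ ?_ ?_ ?_ hh
  · rintro _ (rfl | ⟨v, rfl⟩) f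
    · rw [balancedPart_mul_pairProducts]
      exact Ideal.mul_mem_left _ _ (Ideal.subset_span (Set.mem_insert _ _))
    · refine Ideal.span_mono ?_ (balancedPart_mul_X_pow_mem f v e)
      exact Set.singleton_subset_iff.mpr (Set.mem_insert_of_mem _ ⟨v.1, rfl⟩)
  · simp
  · intro x y _ _ hx hy f
    rw [mul_add, map_add]
    exact add_mem (hx f) (hy f)
  · intro a x _ hx f
    rw [smul_eq_mul, ← mul_assoc]
    exact hx (f * a)

theorem mem_span_of_pairProducts_mem_span {q g : MvPolynomial ι R} {e : ℕ}
    (h : pairProducts R ι g ∈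
      Ideal.span (insert (pairProducts R ι q) (Set.range fun v => X v ^ e))) :
    g ∈ Ideal.span (insert q (Set.range fun i => X i ^ e)) := by
  simpa only [balancedPart_pairProducts] using balancedPart_mem_span_of_mem h

end PairProducts

theorem coeff_eq_zero_of_mem_span_X_pow_s5 {R σ : Type*} [CommSemiring R] {e : ℕ} {t : σ →₀ ℕ}
    (ht : ∀ i, t i < e) {f : MvPolynomial σ R}
    (hf : f ∈ Ideal.span (Set.range fun i => X i ^ e)) : coeff t f = 0 := by
  have hrange : (Set.range fun i => (X i : MvPolynomial σ R) ^ e) =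
      (fun s => monomial s 1) '' Set.range fun i => Finsupp.single i e := by
    rw [← Set.range_comp]
    simp [Function.comp_def, X_pow_eq_monomial]
  rw [hrange, mem_ideal_span_monomial_image] at hf
  by_contra h
  obtain ⟨_, ⟨i, rfl⟩, hi⟩ := hf t (mem_support_iff.mpr h)
  exact (ht i).not_ge (Finsupp.single_le_iff.mp hi)

theorem coeff_X_add_X_pow {R : Type*} [CommSemiring R] (n : ℕ) :
    coeff (Finsupp.single 0 1 + Finsupp.single 1 (n - 1))
      ((X 0 + X 1 : MvPolynomial (Fin 2) R) ^ n) = n := by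
  classical
  have hterm (j : ℕ) : X 0 ^ j * X 1 ^ (n - j) * (n.choose j : MvPolynomial (Fin 2) R) =
      monomial (Finsupp.single 0 j + Finsupp.single 1 (n - j)) (n.choose j : R) := by
    rw [X_pow_eq_monomial, X_pow_eq_monomial, monomial_mul, ← C_eq_coe_nat, mul_comm,
      C_mul_monomial, mul_one, mul_one]
  simp only [add_pow, coeff_sum, hterm, coeff_monomial]
  rw [Finset.sum_eq_single 1]
  · simp
  · intro j _ hj
    rw [if_neg]
    intro h
    simpa [eq_comm, hj] using congrArg (· 0) h
  · intro h
    simp_all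

theorem algHom_map_int_eq_aeval {σ k A : Type*} [CommRing k] [CommRing A] [Algebra k A]
    (g : MvPolynomial σ k →ₐ[k] A) (w : MvPolynomial σ ℤ) :
    g (map (Int.castRingHom k) w) = aeval (fun i => g (X i)) w := by
  conv_lhs => rw [aeval_unique g, ← algebraMap_int_eq, aeval_map_algebraMap]
  rfl

section ZeroSumPoint

variable (R : Type*) [CommRing R] (m : ℕ)

noncomputable def zeroSumPoint : Fin (m + 3) → MvPolynomial (Fin 2) R :=
  Fin.cons (X 0) (Fin.cons (X 1) (Fin.cons (-(X 0 + X 1)) 0))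

theorem sum_zeroSumPoint : ∑ i, zeroSumPoint R m i = 0 := by
  simp [zeroSumPoint, Fin.sum_univ_succ]

variable {R m} {p : ℕ}

theorem map_zeroSumPoint {S : Type*} [CommRing S] (f : R →+* S) (i : Fin (m + 3)) :
    map f (zeroSumPoint R m i) = zeroSumPoint S m i := by
  induction i using Fin.cases with
  | zero => simp [zeroSumPoint]
  | succ i => induction i using Fin.cases with
    | zero => simp [zeroSumPoint]
    | succ i => induction i using Fin.cases with
      | zero => show map f (-(X 0 + X 1)) = -(X 0 + X 1); simp
      | succ i => simp [zeroSumPoint]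

theorem sum_zeroSumPoint_pow (hp : Odd p) :
    ∑ i, zeroSumPoint R m i ^ p = X 0 ^ p + X 1 ^ p - (X 0 + X 1) ^ p := by
  simp only [zeroSumPoint, Fin.sum_univ_succ, Fin.cons_zero, Fin.cons_succ, Pi.zero_apply,
    zero_pow hp.pos.ne', Finset.sum_const_zero, hp.neg_pow]
  ring

theorem zeroSumPoint_pow_mem [Fact p.Prime] [CharP R p] (hp : Odd p) (i : Fin (m + 3)) :
    zeroSumPoint R m i ^ p ∈ Ideal.span (Set.range fun j : Fin 2 => X j ^ p) := by
  have hX (j : Fin 2) :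
      (X j : MvPolynomial (Fin 2) R) ^ p ∈ Ideal.span (Set.range fun j : Fin 2 => X j ^ p) :=
    Ideal.subset_span ⟨j, rfl⟩
  induction i using Fin.cases with
  | zero => exact hX 0
  | succ i => induction i using Fin.cases with
    | zero => exact hX 1
    | succ i => induction i using Fin.cases with
      | zero =>
        show (-(X 0 + X 1)) ^ p ∈ _
        rw [hp.neg_pow, add_pow_char]
        exact neg_mem (add_mem (hX 0) (hX 1))
      | succ i => simp [zeroSumPoint, zero_pow hp.pos.ne']

theorem aeval_zeroSumPoint_mem_span [Fact p.Prime] [CharP R p] (hp : Odd p)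
    {g : MvPolynomial (Fin (m + 3)) R}
    (hg : g ∈ Ideal.span (insert (∑ i, X i) (Set.range fun i => X i ^ p))) :
    aeval (zeroSumPoint R m) g ∈ Ideal.span (Set.range fun j : Fin 2 => X j ^ p) := by
  refine Ideal.mem_comap.mp (Ideal.span_le.mpr ?_ hg)
  rintro _ (rfl | ⟨i, rfl⟩)
  · simp [sum_zeroSumPoint]
  · simpa using zeroSumPoint_pow_mem hp i

theorem coeff_aeval_zeroSumPoint (hp : Odd p) (hp1 : p ≠ 1) {w : MvPolynomial (Fin (m + 3)) ℤ}
    (hw : (∑ i, X i) ^ p = ∑ i, X i ^ p + (p : MvPolynomial (Fin (m + 3)) ℤ) * w) :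
    coeff (Finsupp.single 0 1 + Finsupp.single 1 (p - 1)) (aeval (zeroSumPoint ℤ m) w) = 1 := by
  have h := congrArg (aeval (zeroSumPoint ℤ m)) hw
  simp only [map_pow, map_sum, map_add, map_mul, map_natCast, aeval_X, sum_zeroSumPoint,
    sum_zeroSumPoint_pow hp, zero_pow hp.pos.ne'] at h
  have hsingle (j : Fin 2) : Finsupp.single j p ≠ Finsupp.single 0 1 + Finsupp.single 1 (p - 1) :=
    fun h => by fin_cases j <;> simpa [hp1] using congrArg (· 0) h
  have := congrArg (coeff (Finsupp.single 0 1 + Finsupp.single 1 (p - 1))) h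
  rw [coeff_zero, coeff_add, coeff_sub, coeff_add, coeff_X_pow, coeff_X_pow, if_neg (hsingle 0),
    if_neg (hsingle 1), coeff_X_add_X_pow, ← C_eq_coe_nat, coeff_C_mul] at this
  exact mul_left_cancel₀ (Nat.cast_ne_zero.mpr hp.pos.ne') (by linarith)

theorem map_notMem_span_sum_X_insert_X_pow [Fact p.Prime] (hp : Odd p) {k : Type*} [Field k]
    [CharP k p] {w : MvPolynomial (Fin (m + 3)) ℤ}
    (hw : (∑ i, X i) ^ p = ∑ i, X i ^ p + (p : MvPolynomial (Fin (m + 3)) ℤ) * w) :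
    map (Int.castRingHom k) w ∉ Ideal.span (insert (∑ i, X i) (Set.range fun i => X i ^ p)) := by
  intro hmem
  have hp1 : p ≠ 1 := (Fact.out : p.Prime).ne_one
  have hlt (j : Fin 2) : (Finsupp.single 0 1 + Finsupp.single 1 (p - 1) : Fin 2 →₀ ℕ) j < p := by
    have := hp.pos
    fin_cases j <;> simp <;> omega
  have hmap : aeval (zeroSumPoint k m) (map (Int.castRingHom k) w) =
      map (Int.castRingHom k) (aeval (zeroSumPoint ℤ m) w) := by
    simp only [aeval_eq_bind₁, map_bind₁, map_zeroSumPoint]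
  have h := coeff_eq_zero_of_mem_span_X_pow_s5 hlt (aeval_zeroSumPoint_mem_span hp hmem)
  rw [hmap, coeff_map, coeff_aeval_zeroSumPoint hp hp1 hw, map_one] at h
  exact one_ne_zero h

end ZeroSumPoint

end MvPolynomial

open MvPolynomial in
theorem no_flat_W2_lifting_of_pth_power_quadric_general
    (p : ℕ) [Fact p.Prime] (hodd : p ≠ 2) (n : ℕ) (hn : 3 ≤ n)
    (k : Type) [Field k] [CharP k p] [PerfectRing k p]
    (B : Type) [CommRing B] [Algebra (TruncatedWittVector p 2 k) B]
    (hB : Module.Flat (TruncatedWittVector p 2 k) B) :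
    IsEmpty ((B ⧸ Ideal.span {(p : B)}) ≃+*
      (MvPolynomial (Fin n × Fin 2) k ⧸ Ideal.span
        (insert (∑ i : Fin n, (X (i, (0 : Fin 2)) : MvPolynomial (Fin n × Fin 2) k) *
            X (i, (1 : Fin 2)))
          (Set.range fun v : Fin n × Fin 2 =>
            (X v : MvPolynomial (Fin n × Fin 2) k) ^ p)))) := by
  obtain ⟨m, rfl⟩ := Nat.exists_eq_add_of_le' hn
  have hp : p.Prime := Fact.out
  have := hB
  refine ⟨fun e => ?_⟩
  set I := Ideal.span (insert (∑ i : Fin (m + 3), (X (i, (0 : Fin 2)) :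
    MvPolynomial (Fin (m + 3) × Fin 2) k) * X (i, (1 : Fin 2))) (Set.range fun v => X v ^ p))
  have hX (v) : Ideal.Quotient.mk I (X v) ^ p = 0 := by
    rw [← map_pow, Ideal.Quotient.eq_zero_iff_mem]
    exact Ideal.subset_span (Set.mem_insert_of_mem _ ⟨v, rfl⟩)
  have hsum : ∑ i, Ideal.Quotient.mk I (X (i, 0)) * Ideal.Quotient.mk I (X (i, 1)) = 0 := by
    simp_rw [← map_mul, ← map_sum, Ideal.Quotient.eq_zero_iff_mem]
    exact Ideal.subset_span (Set.mem_insert _ _)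
  obtain ⟨w, hw⟩ := exists_sum_pow_eq_sum_pow_add_mul hp Finset.univ
    (X : Fin (m + 3) → MvPolynomial (Fin (m + 3)) ℤ)
  have hw0 := TruncatedWittVector.aeval_mul_eq_zero_of_ringEquiv k e (fun i => hX (i, 0))
    (fun i => hX (i, 1)) hsum hw
  refine map_notMem_span_sum_X_insert_X_pow (k := k) (hp.odd_of_ne_two hodd) hw
    (mem_span_of_pairProducts_mem_span (e := p) (q := ∑ i, X i) ?_)
  have hq : pairProducts k _ (∑ i, X i) = ∑ i : Fin (m + 3), X (i, 0) * X (i, 1) := by simp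
  rw [hq, ← Ideal.Quotient.eq_zero_iff_mem, ← Ideal.Quotient.mkₐ_eq_mk k, ← AlgHom.comp_apply,
    algHom_map_int_eq_aeval]
  simpa using hw0

open MvPolynomial in
/-- For `n ≥ 3` and `p` an odd prime, the Artinian local `k`-algebra
`A = k[x₁,…,x_{2n}]/(x₁x₂ + … + x_{2n-1}x_{2n}, x₁^p, …, x_{2n}^p)`
does not admit a flat lifting to `W₂(k)`: there is no flat `W₂(k)`-algebra `B`
with `B/pB ≅ A`.  (The `2n` variables are indexed by `Fin n × Fin 2`.) -/
theorem no_flat_W2_lifting_of_pth_power_quadric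
    (p : ℕ) [Fact p.Prime] (hodd : p ≠ 2) (n : ℕ) (hn : 3 ≤ n)
    (k : Type) [Field k] [CharP k p] [ExpChar k p] [PerfectRing k p]
    (B : Type) [CommRing B] [Algebra (TruncatedWittVector p 2 k) B]
    (hB : Module.Flat (TruncatedWittVector p 2 k) B) :
    IsEmpty ((B ⧸ Ideal.span {(p : B)}) ≃+*
      (MvPolynomial (Fin n × Fin 2) k ⧸ Ideal.span
        (insert (∑ i : Fin n, (X (i, (0 : Fin 2)) : MvPolynomial (Fin n × Fin 2) k) *
            X (i, (1 : Fin 2)))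
          (Set.range fun v : Fin n × Fin 2 =>
            (X v : MvPolynomial (Fin n × Fin 2) k) ^ p)))) :=
  no_flat_W2_lifting_of_pth_power_quadric_general p hodd n hn k B hB
end

section
/- Let A be an F_p-algebra with a Frobenius splitting φ : A → A (an additive map satisfying φ(a^p b) = a φ(b) and φ(1) = 1). Then the set A × A with operations (a_0,a_1) +_φ (b_0,b_1) = (a_0+b_0, a_1+b_1 − φ(P(a_0,b_0))) and (a_0,a_1) ·_φ (b_0,b_1) = (a_0 b_0, a_0 b_1 + b_0 a_1), where P(a,b) = ((a+b)^p − a^p − b^p)/p ∈ Z[a,b], is a commutative ring W_2^φ(A). -/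
/-- A type-level copy of `A × A`, the underlying set of twisted Witt vectors. -/
structure WittPair (A : Type*) where
  fst : A
  snd : A

/-- The value in `A` of the integral polynomial `P(a,b) = ((a+b)^p − a^p − b^p)/p`,
written via binomial coefficients: `P(a,b) = Σ_{0<i<p} (C(p,i)/p) a^i b^{p-i}`. -/
def wittP (p : ℕ) {A : Type*} [CommRing A] (a b : A) : A :=
  ∑ i ∈ Finset.Ioo 0 p, ((p.choose i / p : ℕ) : A) * a ^ i * b ^ (p - i)

/-!
The twisted addition makes `W₂^φ(A)` the extension of `(A, +)` by `(A, +)` along the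
2-cocycle `(a, b) ↦ -φ(P(a, b))`, so the group axioms reduce to `P` being a symmetric
2-cocycle. Both identities hold after multiplication by `p`, where `p P(a, b)` is
`(a + b)^p - a^p - b^p`; hence they hold in `ℤ[X, Y, Z]`, where `p` is a non-zero-divisor,
and so in every commutative ring by specialization. The multiplication is that of the
dual numbers `A[ε]`, and it distributes over the twisted addition because `P` is
homogeneous of degree `p` and `φ(c^p w) = c φ(w)`.
-/

open Finset MvPolynomial

section WittP

variable {p : ℕ} {A : Type*} [CommRing A]

theorem wittP_zero_left (b : A) : wittP p 0 b = 0 :=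
  sum_eq_zero fun i hi => by rw [zero_pow (mem_Ioo.mp hi).1.ne', mul_zero, zero_mul]

theorem wittP_mul_mul (c a b : A) :
    wittP p (c * a) (c * b) = c ^ p * wittP p a b := by
  rw [wittP, wittP, mul_sum]
  refine sum_congr rfl fun i hi => ?_
  have hpow : c ^ p = c ^ i * c ^ (p - i) := by
    rw [← pow_add, Nat.add_sub_cancel' (mem_Ioo.mp hi).2.le]
  rw [mul_pow, mul_pow, hpow]
  ring

theorem map_wittP {B F : Type*} [CommRing B] [FunLike F A B]
    [RingHomClass F A B] (f : F) (a b : A) : f (wittP p a b) = wittP p (f a) (f b) := by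
  simp [wittP, map_sum]

theorem natCast_mul_wittP (hp : p.Prime) (a b : A) :
    (p : A) * wittP p a b = (a + b) ^ p - a ^ p - b ^ p := by
  have hrange : insert 0 (insert p (Ioo 0 p)) = range (p + 1) := by
    rw [Ioo_insert_right hp.pos, Ioc_insert_left (Nat.zero_le p), Nat.range_succ_eq_Icc_zero]
  calc (p : A) * wittP p a b = ∑ i ∈ Ioo 0 p, a ^ i * b ^ (p - i) * (p.choose i : A) := by
        rw [wittP, mul_sum]
        refine sum_congr rfl fun i hi => ?_
        obtain ⟨hi0, hip⟩ := mem_Ioo.mp hi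
        have hdvd := congrArg (Nat.cast : ℕ → A)
          (Nat.mul_div_cancel' (hp.dvd_choose_self hi0.ne' hip))
        push_cast at hdvd
        linear_combination a ^ i * b ^ (p - i) * hdvd
    _ = (a + b) ^ p - a ^ p - b ^ p := by
        rw [add_pow, ← hrange, sum_insert (by simp [hp.ne_zero.symm]), sum_insert (by simp)]
        simp only [pow_zero, Nat.sub_zero, Nat.choose_zero_right, Nat.choose_self, Nat.cast_one,
          Nat.sub_self, one_mul, mul_one]
        ring

section CharZero

variable {R : Type*} [CommRing R] [IsDomain R] [CharZero R]

theorem wittP_comm_of_charZero (hp : p.Prime) (a b : R) : wittP p a b = wittP p b a := by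
  apply mul_left_cancel₀ (Nat.cast_ne_zero.mpr hp.ne_zero : (p : R) ≠ 0)
  rw [natCast_mul_wittP hp, natCast_mul_wittP hp]
  ring

theorem wittP_add_wittP_add_of_charZero (hp : p.Prime) (a b c : R) :
    wittP p a b + wittP p (a + b) c = wittP p b c + wittP p a (b + c) := by
  apply mul_left_cancel₀ (Nat.cast_ne_zero.mpr hp.ne_zero : (p : R) ≠ 0)
  simp only [mul_add, natCast_mul_wittP hp]
  ring

end CharZero

theorem wittP_comm (hp : p.Prime) (a b : A) : wittP p a b = wittP p b a := by
  simpa [map_wittP] using congrArg (aeval ![a, b])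
    (wittP_comm_of_charZero hp (X 0 : MvPolynomial (Fin 2) ℤ) (X 1))

theorem wittP_add_wittP_add (hp : p.Prime) (a b c : A) :
    wittP p a b + wittP p (a + b) c = wittP p b c + wittP p a (b + c) := by
  simpa [map_wittP] using congrArg (aeval ![a, b, c])
    (wittP_add_wittP_add_of_charZero hp (X 0 : MvPolynomial (Fin 3) ℤ) (X 1) (X 2))

end WittP

attribute [ext] WittPair

namespace WittPair

variable {A : Type*} [CommRing A]

@[simps]
def twistedAdd (p : ℕ) (φ : A → A) (x y : WittPair A) : WittPair A :=
  ⟨x.fst + y.fst, x.snd + y.snd - φ (wittP p x.fst y.fst)⟩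

@[simps]
def twistedNeg (p : ℕ) (φ : A → A) (x : WittPair A) : WittPair A :=
  ⟨-x.fst, -x.snd + φ (wittP p x.fst (-x.fst))⟩

@[simps]
def dualMul (x y : WittPair A) : WittPair A :=
  ⟨x.fst * y.fst, x.fst * y.snd + y.fst * x.snd⟩

variable {p : ℕ}

theorem twistedAdd_assoc (hp : p.Prime) (φ : A →+ A) (x y z : WittPair A) :
    twistedAdd p φ (twistedAdd p φ x y) z = twistedAdd p φ x (twistedAdd p φ y z) := by
  have hcocycle := congrArg φ (wittP_add_wittP_add hp x.fst y.fst z.fst)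
  rw [map_add, map_add] at hcocycle
  ext
  · exact add_assoc _ _ _
  · simp only [twistedAdd_snd, twistedAdd_fst]
    linear_combination -hcocycle

theorem twistedAdd_comm (hp : p.Prime) (φ : A → A) (x y : WittPair A) :
    twistedAdd p φ x y = twistedAdd p φ y x := by
  ext
  · exact add_comm _ _
  · simp only [twistedAdd_snd, wittP_comm hp x.fst y.fst, add_comm x.snd]

theorem zero_twistedAdd (φ : A →+ A) (x : WittPair A) : twistedAdd p φ ⟨0, 0⟩ x = x := by
  ext
  · exact zero_add _
  · simp [wittP_zero_left]

theorem twistedNeg_twistedAdd_cancel (hp : p.Prime) (φ : A → A) (x : WittPair A) :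
    twistedAdd p φ (twistedNeg p φ x) x = ⟨0, 0⟩ := by
  ext
  · exact neg_add_cancel _
  · simp only [twistedAdd_snd, twistedNeg_snd, twistedNeg_fst, wittP_comm hp (-x.fst)]
    ring

theorem dualMul_twistedAdd (φ : A →+ A) (hφ : ∀ a b : A, φ (a ^ p * b) = a * φ b)
    (x y z : WittPair A) :
    dualMul x (twistedAdd p φ y z) = twistedAdd p φ (dualMul x y) (dualMul x z) := by
  have hhom := hφ x.fst (wittP p y.fst z.fst)
  rw [← wittP_mul_mul] at hhom
  ext
  · exact mul_add _ _ _
  · simp only [dualMul_snd, dualMul_fst, twistedAdd_snd, twistedAdd_fst]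
    linear_combination hhom

theorem dualMul_assoc (x y z : WittPair A) :
    dualMul (dualMul x y) z = dualMul x (dualMul y z) := by
  ext <;> simp only [dualMul_fst, dualMul_snd] <;> ring

theorem dualMul_comm (x y : WittPair A) : dualMul x y = dualMul y x := by
  ext <;> simp only [dualMul_fst, dualMul_snd] <;> ring

theorem one_dualMul (x : WittPair A) : dualMul ⟨1, 0⟩ x = x := by
  ext <;> simp

theorem zero_dualMul (x : WittPair A) : dualMul ⟨0, 0⟩ x = ⟨0, 0⟩ := by
  ext <;> simp

abbrev twistedCommRing (hp : p.Prime) (φ : A →+ A) (hφ : ∀ a b : A, φ (a ^ p * b) = a * φ b) :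
    CommRing (WittPair A) :=
  letI : Add (WittPair A) := ⟨twistedAdd p φ⟩
  letI : Zero (WittPair A) := ⟨⟨0, 0⟩⟩
  letI : Neg (WittPair A) := ⟨twistedNeg p φ⟩
  letI : Mul (WittPair A) := ⟨dualMul⟩
  letI : One (WittPair A) := ⟨⟨1, 0⟩⟩
  { add_assoc := twistedAdd_assoc hp φ
    zero_add := zero_twistedAdd φ
    add_zero := fun x => (twistedAdd_comm hp φ x _).trans (zero_twistedAdd φ x)
    neg_add_cancel := twistedNeg_twistedAdd_cancel hp φ
    add_comm := twistedAdd_comm hp φ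
    nsmul := nsmulRec
    zsmul := zsmulRec
    left_distrib := dualMul_twistedAdd φ hφ
    right_distrib := fun x y z => by
      change dualMul (twistedAdd p φ x y) z = twistedAdd p φ (dualMul x z) (dualMul y z)
      rw [dualMul_comm _ z, dualMul_twistedAdd φ hφ, dualMul_comm z, dualMul_comm z]
    zero_mul := zero_dualMul
    mul_zero := fun x => (dualMul_comm x _).trans (zero_dualMul x)
    mul_assoc := dualMul_assoc
    one_mul := one_dualMul
    mul_one := fun x => (dualMul_comm x _).trans (one_dualMul x)
    mul_comm := dualMul_comm }

end WittPair

theorem twistedWittPair_commRing_exists_general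
    (p : ℕ) (hp : p.Prime) (A : Type*) [CommRing A]
    (φ : A → A) (hadd : ∀ a b : A, φ (a + b) = φ a + φ b)
    (hsemilinear : ∀ a b : A, φ (a ^ p * b) = a * φ b) :
    ∃ inst : CommRing (WittPair A),
      letI := inst
      (∀ x y : WittPair A,
          x + y = ⟨x.fst + y.fst, x.snd + y.snd - φ (wittP p x.fst y.fst)⟩) ∧
      (∀ x y : WittPair A,
          x * y = ⟨x.fst * y.fst, x.fst * y.snd + y.fst * x.snd⟩) :=
  ⟨WittPair.twistedCommRing hp (AddMonoidHom.mk' φ hadd) hsemilinear,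
    fun _ _ => rfl, fun _ _ => rfl⟩

/-- Let `A` be an `𝔽_p`-algebra with a Frobenius splitting `φ : A → A`
(additive, `φ(a^p b) = a φ(b)`, `φ(1) = 1`).  Then `A × A` with the twisted
operations `(a₀,a₁) + (b₀,b₁) = (a₀+b₀, a₁+b₁−φ(P(a₀,b₀)))` and
`(a₀,a₁)·(b₀,b₁) = (a₀b₀, a₀b₁+b₀a₁)` is a commutative ring `W₂^φ(A)`. -/
theorem twistedWittPair_commRing_exists
    (p : ℕ) (hp : p.Prime) (A : Type*) [CommRing A] [CharP A p]
    (φ : A → A) (hadd : ∀ a b : A, φ (a + b) = φ a + φ b)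
    (hsemilinear : ∀ a b : A, φ (a ^ p * b) = a * φ b)
    (hone : φ 1 = 1) :
    ∃ inst : CommRing (WittPair A),
      letI := inst
      (∀ x y : WittPair A,
          x + y = ⟨x.fst + y.fst, x.snd + y.snd - φ (wittP p x.fst y.fst)⟩) ∧
      (∀ x y : WittPair A,
          x * y = ⟨x.fst * y.fst, x.fst * y.snd + y.fst * x.snd⟩) :=
  twistedWittPair_commRing_exists_general p hp A φ hadd hsemilinear
end

section
/- For positive integers a, s, n with the entries defined, the n × n matrix with (i,j) entry the binomial coefficient C(a, s + i − j) has determinant ∏_{i=1}^{n} ((a+i−1)!·(i−1)!) / ((s+i−1)!·(a−s+i−1)!). -/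
/-!
Scaling row `i` by `(s+i)! (c-s-i)!`, where `c = a + n - 1`, turns the entry `C(a, s+i-j)` into
`a! P_j(s+i)` with `P_j(x) = x(x-1)⋯(x-j+1) · (c-x)(c-x-1)⋯(c-x-n+j+2)`, a polynomial of degree
`n - 1`. The determinant `det (P_j(x_i))` is a Vandermonde determinant times the determinant of the
coefficients of the `P_j`, so it does not change under the shift `x_i ↦ x_i - s`. At the points
`x_i = i` the matrix is lower triangular, since `P_j(i) = 0` for `i < j`, with diagonal entries
`i! (c-i)! / a!`.
-/

open Finset Polynomial
open scoped Nat

namespace Matrix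

variable {R : Type*} [CommRing R] {n : ℕ}

theorem of_eval_eq_vandermonde_mul_of_coeff (p : Fin n → R[X])
    (hp : ∀ j, (p j).natDegree < n) (v : Fin n → R) :
    of (fun i j => (p j).eval (v i)) = vandermonde v * of (fun (k j : Fin n) => (p j).coeff k) := by
  ext i j
  rw [mul_apply, of_apply, eval_eq_sum_range' (hp j), ← Fin.sum_univ_eq_sum_range]
  simp only [vandermonde_apply, of_apply, mul_comm]

theorem det_of_eval_add (p : Fin n → R[X]) (hp : ∀ j, (p j).natDegree < n)
    (v : Fin n → R) (c : R) :
    (of fun i j => (p j).eval (v i + c)).det = (of fun i j => (p j).eval (v i)).det := by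
  rw [of_eval_eq_vandermonde_mul_of_coeff p hp, of_eval_eq_vandermonde_mul_of_coeff p hp,
    det_mul, det_mul, det_vandermonde_add]

end Matrix

theorem Nat.factorial_mul_factorial_mul_choose_sub {a p q j k : ℕ} (hj : j ≤ p)
    (h : p + q = a + (j + k)) :
    p ! * q ! * a.choose (p - j) = a ! * (p.descFactorial j * q.descFactorial k) := by
  by_cases hpa : p - j ≤ a
  · have hk : k ≤ q := by omega
    have hqk : q - k = a - (p - j) := by omega
    rw [← Nat.factorial_mul_descFactorial hj, ← Nat.factorial_mul_descFactorial hk, hqk,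
      ← Nat.choose_mul_factorial_mul_factorial hpa]
    ring
  · rw [Nat.choose_eq_zero_of_lt (by omega), Nat.descFactorial_of_lt (k := k) (by omega)]
    simp

section descPochhammerPair

variable (R : Type*) [CommRing R]

noncomputable def descPochhammerPair (c k l : ℕ) : R[X] :=
  descPochhammer R k * (descPochhammer R l).comp ((c : R[X]) - X)

theorem natDegree_descPochhammerPair [IsDomain R] (c k l : ℕ) :
    (descPochhammerPair R c k l).natDegree ≤ k + l := by
  refine natDegree_mul_le.trans (_root_.add_le_add (descPochhammer_natDegree R k).le ?_)
  refine natDegree_comp_le.trans ?_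
  have : ((c : R[X]) - X).natDegree ≤ 1 := by compute_degree
  simpa [descPochhammer_natDegree] using Nat.mul_le_mul_left l this

variable {R}

theorem descPochhammerPair_eval_natCast {c m : ℕ} (hm : m ≤ c) (k l : ℕ) :
    (descPochhammerPair R c k l).eval (m : R) = m.descFactorial k * (c - m).descFactorial l := by
  rw [descPochhammerPair, eval_mul, eval_comp, eval_sub, eval_natCast, eval_X, ← Nat.cast_sub hm,
    descPochhammer_eval_eq_descFactorial, descPochhammer_eval_eq_descFactorial]

theorem det_descPochhammerPair_eval_natCast {c n : ℕ} (hn : n ≤ c + 1) :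
    (Matrix.of fun i j : Fin n => (descPochhammerPair R c j (n - 1 - j)).eval ((i : ℕ) : R)).det =
      ∏ i : Fin n, ((i : ℕ)! * (c - i).descFactorial (n - 1 - i) : R) := by
  have hic (i : Fin n) : (i : ℕ) ≤ c := by omega
  rw [Matrix.det_of_isLowerTriangular]
  · refine prod_congr rfl fun i _ => ?_
    rw [Matrix.of_apply, descPochhammerPair_eval_natCast (hic i), Nat.descFactorial_self]
  · intro i j (hij : i < j)
    rw [Matrix.of_apply, descPochhammerPair_eval_natCast (hic i), Nat.descFactorial_of_lt hij]
    simp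

theorem det_descPochhammerPair_eval_natCast_add [IsDomain R] {c n : ℕ} (hn : n ≤ c + 1)
    (s : ℕ) :
    (Matrix.of fun i j : Fin n =>
        (descPochhammerPair R c j (n - 1 - j)).eval ((s + i : ℕ) : R)).det =
      ∏ i : Fin n, ((i : ℕ)! * (c - i).descFactorial (n - 1 - i) : R) := by
  have hdeg (j : Fin n) : (descPochhammerPair R c j (n - 1 - j)).natDegree < n :=
    (natDegree_descPochhammerPair R c _ _).trans_lt (by omega)
  simp only [Nat.cast_add, add_comm (s : R)]
  rw [Matrix.det_of_eval_add _ hdeg (fun i => ((i : ℕ) : R)),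
    det_descPochhammerPair_eval_natCast hn]

end descPochhammerPair

section binomialMatrix

variable (R : Type*) [CommRing R]

def binomialMatrix (a s n : ℕ) : Matrix (Fin n) (Fin n) R :=
  Matrix.of fun i j => if (j : ℕ) ≤ s + i then (a.choose (s + i - j) : R) else 0

variable {R}

theorem factorial_mul_factorial_mul_binomialMatrix {a s n : ℕ} (hsa : s ≤ a) (i j : Fin n) :
    ((s + i)! * (a + (n - 1) - (s + i))! : R) * binomialMatrix R a s n i j =
      a ! * (descPochhammerPair R (a + (n - 1)) j (n - 1 - j)).eval ((s + i : ℕ) : R) := by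
  rw [descPochhammerPair_eval_natCast (by omega), binomialMatrix, Matrix.of_apply]
  by_cases hj : (j : ℕ) ≤ s + i
  · rw [if_pos hj]
    exact_mod_cast congrArg (Nat.cast : ℕ → R) (Nat.factorial_mul_factorial_mul_choose_sub
      (a := a) (q := a + (n - 1) - (s + i)) (k := n - 1 - j) hj (by omega))
  · simp [hj, Nat.descFactorial_of_lt (not_le.mp hj)]

theorem prod_factorial_mul_det_binomialMatrix [IsDomain R] {a s n : ℕ} (hsa : s ≤ a) :
    (∏ i : Fin n, ((s + i)! * (a + (n - 1) - (s + i))! : R)) * (binomialMatrix R a s n).det =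
      ∏ i : Fin n, (a ! * ((i : ℕ)! * (a + (n - 1) - i).descFactorial (n - 1 - i)) : R) := by
  set c := a + (n - 1)
  calc (∏ i : Fin n, ((s + i)! * (c - (s + i))! : R)) * (binomialMatrix R a s n).det
      = (Matrix.of fun i j : Fin n =>
          ((s + i)! * (c - (s + i))! : R) * binomialMatrix R a s n i j).det :=
        (Matrix.det_mul_column _ _).symm
    _ = (Matrix.of fun i j : Fin n =>
          (a ! : R) * (descPochhammerPair R c j (n - 1 - j)).eval ((s + i : ℕ) : R)).det := by
        congr 1
        ext i j
        exact factorial_mul_factorial_mul_binomialMatrix hsa i j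
    _ = (∏ _ : Fin n, (a ! : R)) * (Matrix.of fun i j : Fin n =>
          (descPochhammerPair R c j (n - 1 - j)).eval ((s + i : ℕ) : R)).det :=
        Matrix.det_mul_column _ _
    _ = _ := by rw [det_descPochhammerPair_eval_natCast_add (by omega), ← prod_mul_distrib]

theorem prod_range_factorial_mul_det_binomialMatrix [IsDomain R] {a s n : ℕ} (hsa : s ≤ a) :
    (∏ i ∈ range n, ((s + i)! * (a - s + i)! : R)) * (binomialMatrix R a s n).det =
      ∏ i ∈ range n, ((a + i)! * i ! : R) := by
  set c := a + (n - 1)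
  have hdiag (i : ℕ) (hi : i ∈ range n) :
      (a ! * (i ! * (c - i).descFactorial (n - 1 - i)) : R) = (c - i)! * i ! := by
    rw [← Nat.factorial_mul_descFactorial (show n - 1 - i ≤ c - i by omega),
      show c - i - (n - 1 - i) = a by have := mem_range.mp hi; omega]
    push_cast; ring
  have hreflect (f : ℕ → ℕ) (d : ℕ) (hf : ∀ i < n, f (n - 1 - i) = d + i) :
      ∏ i ∈ range n, ((f i)! : R) = ∏ i ∈ range n, ((d + i)! : R) := by
    rw [← prod_range_reflect]
    exact prod_congr rfl fun i hi => by rw [hf i (mem_range.mp hi)]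
  have h := prod_factorial_mul_det_binomialMatrix (R := R) (n := n) hsa
  rw [Fin.prod_univ_eq_prod_range (fun i => ((s + i)! * (c - (s + i))! : R)),
    Fin.prod_univ_eq_prod_range (fun i => (a ! * (i ! * (c - i).descFactorial (n - 1 - i)) : R)),
    prod_congr rfl hdiag, prod_mul_distrib, prod_mul_distrib,
    hreflect (fun i => c - (s + i)) (a - s) (by omega), hreflect (fun i => c - i) a (by omega)] at h
  rwa [prod_mul_distrib, prod_mul_distrib]

end binomialMatrix

theorem det_binomial_matrix_general
    (a s n : ℕ) (hsa : s ≤ a) :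
    Matrix.det (Matrix.of fun i j : Fin n =>
      if (j : ℕ) ≤ s + (i : ℕ)
        then ((a.choose (s + (i : ℕ) - (j : ℕ)) : ℚ))
        else 0) =
    ∏ i ∈ Finset.range n,
      (((a + i).factorial : ℚ) * (i.factorial : ℚ)) /
        (((s + i).factorial : ℚ) * ((a - s + i).factorial : ℚ)) := by
  rw [prod_div_distrib, eq_div_iff (by positivity), mul_comm]
  exact prod_range_factorial_mul_det_binomialMatrix hsa

/-- The binomial determinant identity: for positive integers `a, s, n` with `s ≤ a`,
the `n × n` matrix with `(i,j)` entry `C(a, s + i − j)` (interpreted as `0` when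
`s + i − j < 0`; automatically `0` when `s + i − j > a`) has determinant
`∏_{i=1}^{n} ((a+i−1)!·(i−1)!) / ((s+i−1)!·(a−s+i−1)!)`. -/
theorem det_binomial_matrix
    (a s n : ℕ) (ha : 0 < a) (hs : 0 < s) (hn : 0 < n) (hsa : s ≤ a) :
    Matrix.det (Matrix.of fun i j : Fin n =>
      if (j : ℕ) ≤ s + (i : ℕ)
        then ((a.choose (s + (i : ℕ) - (j : ℕ)) : ℚ))
        else 0) =
    ∏ i ∈ Finset.range n,
      (((a + i).factorial : ℚ) * (i.factorial : ℚ)) /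
        (((s + i).factorial : ℚ) * ((a - s + i).factorial : ℚ)) :=
  det_binomial_matrix_general a s n hsa
end
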